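/- Let α₀, α₁ ∈ ℂ. Define T₀ : {(x,y,z,w,q) ∈ ℂ⁵ : z ≠ 0} → ℂ⁵ by T₀(x,y,z,w,q) = (−(xz + 3α₀)z, y/z, 1/z, (w − y/(3z))z, q) and T₁ : {(x,y,z,w,q) ∈ ℂ⁵ : z ≠ 0} → ℂ⁵ by T₁(x,y,z,w,q) = (x + 3zw + (9/2)z²q + (27/8)z⁴, −(yz + 3α₁)z, 1/z, w + 3zq + 3z³, q + (3/2)z²). Then at every point with z ≠ 0 the Jacobian determinant of T₀ equals 1 and the Jacobian determinant of T₁ equals 1; equivalently, the transition functions preserve the 5-form dx ∧ dy ∧ dz ∧ dw ∧ dq. -/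

import Mathlib

/-!
In both Jacobian matrices the `z`-row has the single nonzero entry `-1/z²`, coming from the
component `1/z`, and the complementary `4 × 4` minor is triangular with determinant `-z²`, so both
determinants equal `1`.
-/

/-- The transition function `T₀` to chart 0 of the symmetric form (11),
on coordinates `(x,y,z,w,q) = (v 0, v 1, v 2, v 3, v 4)`. -/
noncomputable def T0 (a0 : ℂ) (v : Fin 5 → ℂ) : Fin 5 → ℂ :=
  ![-(v 0 * v 2 + 3 * a0) * v 2,
    v 1 / v 2,
    1 / v 2,
    (v 3 - v 1 / (3 * v 2)) * v 2,
    v 4]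

/-- The transition function `T₁` to chart 1 of the symmetric form (11). -/
noncomputable def T1 (a1 : ℂ) (v : Fin 5 → ℂ) : Fin 5 → ℂ :=
  ![v 0 + 3 * v 2 * v 3 + (9/2) * v 2 ^ 2 * v 4 + (27/8) * v 2 ^ 4,
    -(v 1 * v 2 + 3 * a1) * v 2,
    1 / v 2,
    v 3 + 3 * v 2 * v 4 + 3 * v 2 ^ 3,
    v 4 + (3/2) * v 2 ^ 2]

section Jacobian

variable {𝕜 ι κ : Type*} [NontriviallyNormedField 𝕜] [Fintype ι] [DecidableEq ι]

noncomputable def jacobianMatrix (f : (ι → 𝕜) → κ → 𝕜) (p : ι → 𝕜) : Matrix κ ι 𝕜 :=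
  Matrix.of fun i j => fderiv 𝕜 (fun v => f v i) p (Pi.single j 1)

theorem fderiv_apply_single_eq_deriv_update {F : Type*} [NormedAddCommGroup F] [NormedSpace 𝕜 F]
    {f : (ι → 𝕜) → F} {p : ι → 𝕜} (hf : DifferentiableAt 𝕜 f p) (j : ι) :
    fderiv 𝕜 f p (Pi.single j 1) = deriv (fun t => f (Function.update p j t)) (p j) :=
  (hf.hasFDerivAt.comp_hasDerivAt_of_eq (p j) (hasDerivAt_update p j (p j))
    (Function.update_eq_self j p).symm).deriv.symm

theorem jacobianMatrix_apply_eq_deriv_update {f : (ι → 𝕜) → κ → 𝕜} {p : ι → 𝕜} {i : κ}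
    (hf : DifferentiableAt 𝕜 (fun v => f v i) p) (j : ι) :
    jacobianMatrix f p i j = deriv (fun t => f (Function.update p j t) i) (p j) :=
  fderiv_apply_single_eq_deriv_update hf j

end Jacobian

section Transition

variable {p : Fin 5 → ℂ}

theorem differentiableAt_T0_apply (a0 : ℂ) (hz : p 2 ≠ 0) (i : Fin 5) :
    DifferentiableAt ℂ (fun v => T0 a0 v i) p := by
  fin_cases i <;> simp [T0] <;> fun_prop (disch := simp [hz])

theorem differentiableAt_T1_apply (a1 : ℂ) (hz : p 2 ≠ 0) (i : Fin 5) :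
    DifferentiableAt ℂ (fun v => T1 a1 v i) p := by
  fin_cases i <;> simp [T1] <;> fun_prop (disch := simp [hz])

theorem jacobianMatrix_T0 (a0 : ℂ) (hz : p 2 ≠ 0) :
    jacobianMatrix (T0 a0) p =
      !![-p 2 ^ 2, 0, -(2 * p 0 * p 2 + 3 * a0), 0, 0;
        0, (p 2)⁻¹, -(p 1 / p 2 ^ 2), 0, 0;
        0, 0, -1 / p 2 ^ 2, 0, 0;
        0, -1 / 3, p 3, p 2, 0;
        0, 0, 0, 0, 1] := by
  ext i j
  rw [jacobianMatrix_apply_eq_deriv_update (differentiableAt_T0_apply a0 hz i)]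
  fin_cases i <;> fin_cases j <;>
    simp (disch := first | fun_prop (disch := simp [hz]) | simp [hz])
      [T0, deriv_fun_mul, deriv_fun_div] <;>
    field_simp <;> ring

theorem jacobianMatrix_T1 (a1 : ℂ) (hz : p 2 ≠ 0) :
    jacobianMatrix (T1 a1) p =
      !![1, 0, 3 * p 3 + 9 * p 2 * p 4 + 27 / 2 * p 2 ^ 3, 3 * p 2, 9 / 2 * p 2 ^ 2;
        0, -p 2 ^ 2, -(2 * p 1 * p 2 + 3 * a1), 0, 0;
        0, 0, -1 / p 2 ^ 2, 0, 0;
        0, 0, 3 * p 4 + 9 * p 2 ^ 2, 1, 3 * p 2;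
        0, 0, 3 * p 2, 0, 1] := by
  ext i j
  rw [jacobianMatrix_apply_eq_deriv_update (differentiableAt_T1_apply a1 hz i)]
  fin_cases i <;> fin_cases j <;>
    simp (disch := fun_prop (disch := simp [hz])) [T1, Function.update_apply, deriv_fun_mul] <;>
    field_simp <;> ring

theorem det_jacobianMatrix_T0 (a0 : ℂ) (hz : p 2 ≠ 0) : (jacobianMatrix (T0 a0) p).det = 1 := by
  rw [jacobianMatrix_T0 a0 hz]
  simp [Matrix.det_succ_row_zero, Fin.sum_univ_succ]
  field_simp

theorem det_jacobianMatrix_T1 (a1 : ℂ) (hz : p 2 ≠ 0) : (jacobianMatrix (T1 a1) p).det = 1 := by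
  rw [jacobianMatrix_T1 a1 hz]
  simp [Matrix.det_succ_row_zero, Fin.sum_univ_succ]
  field_simp

end Transition

/-- At every point with `z ≠ 0` the Jacobian determinants of the
transition functions `T₀` and `T₁` equal `1`; i.e. they preserve the 5-form
`dx ∧ dy ∧ dz ∧ dw ∧ dq`. -/
theorem stmt12 (a0 a1 : ℂ) :
    (∀ p : Fin 5 → ℂ, p 2 ≠ 0 →
      Matrix.det (Matrix.of fun i j =>
        fderiv ℂ (fun v : Fin 5 → ℂ => T0 a0 v i) p (Pi.single j 1)) = 1) ∧
    (∀ p : Fin 5 → ℂ, p 2 ≠ 0 →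
      Matrix.det (Matrix.of fun i j =>
        fderiv ℂ (fun v : Fin 5 → ℂ => T1 a1 v i) p (Pi.single j 1)) = 1) :=
  ⟨fun _ hz => det_jacobianMatrix_T0 a0 hz, fun _ hz => det_jacobianMatrix_T1 a1 hz⟩
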